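/- In the discrete two-round voting model with n ≥ 6 even candidates and width parameter l satisfying 2 ≤ l ≤ n/2 − 1, the limit superior as m → ∞ of (1/m)·log(1 − p_1(n, m, l)) is strictly negative; in particular it is at most log( max{ 1 − (1/n)(√(l+1) − √2)², 1 − (1/n)(√(n−l) − √l)² } ) < 0. -/

import Mathlib

open Finset Filter MeasureTheory

namespace TwoRound

/-- Candidate at position `r` (0-indexed) in the clockwise preference list
`(s, s+1, …, n, 1, …, s−1)` of the voter with seed `s ∈ {1,…,n}`. -/
def prefAt (n s r : ℕ) : ℕ := (s - 1 + r) % n + 1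

/-- The candidate of `S` that the voter with seed `s` votes for: the first element of the
clockwise preference list of `s` that belongs to `S`. -/
noncomputable def voteOf (n : ℕ) (S : Finset ℕ) (s : ℕ) : ℕ :=
  haveI : Decidable (∃ r, prefAt n s r ∈ S) := Classical.dec _
  if h : ∃ r, prefAt n s r ∈ S then prefAt n s (Nat.find h) else 0

/-- `Xi n S i s` : the number of votes cast for candidate `i` in an election among the
candidates of `S`, when the voters have seeds `s 0, …, s (m-1)`. -/
noncomputable def Xi (n : ℕ) {m : ℕ} (S : Finset ℕ) (i : ℕ) (s : Fin m → ℕ) : ℕ :=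
  haveI := Classical.decPred fun j : Fin m => voteOf n S (s j) = i
  (Finset.univ.filter fun j : Fin m => voteOf n S (s j) = i).card

/-- The seeds (valued in `{1,…,n}`) associated with a sample point `σ : Fin m → Fin n`. -/
def seed {m n : ℕ} (σ : Fin m → Fin n) (j : Fin m) : ℕ := (σ j : ℕ) + 1

/-- Probability of an event when the `m` voters choose their seeds independently and
uniformly at random on `{1,…,n}`. -/
noncomputable def Pr (n m : ℕ) (E : (Fin m → Fin n) → Prop) : ℝ :=
  haveI := Classical.decPred E
  ((Finset.univ.filter E).card : ℝ) / (n : ℝ) ^ m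

/-- The set `A = {1,…,l} ∪ {l+2i : 1 ≤ i ≤ (n−2l)/2}`. -/
def Acl (n l : ℕ) : Finset ℕ :=
  Finset.Icc 1 l ∪ (Finset.Icc 1 ((n - 2 * l) / 2)).image fun i => l + 2 * i

/-- The set `B = {1,…,n} \ A`. -/
def Bcl (n l : ℕ) : Finset ℕ := Finset.Icc 1 n \ Acl n l

/-- Candidate `1` wins the two-round election: `1` strictly uniquely maximizes `Ξ_A` over `A`,
some `w` strictly uniquely maximizes `Ξ_B` over `B`, and `1` strictly beats `w` head-to-head. -/
def Wins1 (n l : ℕ) {m : ℕ} (σ : Fin m → Fin n) : Prop :=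
  (∀ i ∈ Acl n l, i ≠ 1 → Xi n (Acl n l) i (seed σ) < Xi n (Acl n l) 1 (seed σ)) ∧
  ∃ w ∈ Bcl n l,
    (∀ i ∈ Bcl n l, i ≠ w → Xi n (Bcl n l) i (seed σ) < Xi n (Bcl n l) w (seed σ)) ∧
    Xi n {1, w} w (seed σ) < Xi n {1, w} 1 (seed σ)

/-- `p₁(n, m, l)` : the probability that candidate 1 wins the two-round election. -/
noncomputable def p1 (n m l : ℕ) : ℝ := Pr n m (Wins1 n l)


/-- clockwise distance from seed `s` to candidate `i`. -/
def dcl (n s i : ℕ) : ℕ := (n + i - s) % n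

lemma dcl_eq {n s i : ℕ} (hs1 : 1 ≤ s) (hsn : s ≤ n) (hi1 : 1 ≤ i) (hin : i ≤ n) :
    dcl n s i = if s ≤ i then i - s else n + i - s := by
  unfold dcl
  split_ifs with h
  · have h1 : n + i - s = n + (i - s) := by omega
    rw [h1, Nat.add_mod_left, Nat.mod_eq_of_lt (by omega)]
  · exact Nat.mod_eq_of_lt (by omega)

lemma dcl_lt {n s i : ℕ} (hn : 0 < n) : dcl n s i < n := Nat.mod_lt _ hn

lemma prefAt_eq {n s r : ℕ} (hs1 : 1 ≤ s) (hsn : s ≤ n) (hr : r < n) :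
    prefAt n s r = if s + r ≤ n then s + r else s + r - n := by
  unfold prefAt
  split_ifs with h
  · rw [Nat.mod_eq_of_lt (by omega)]; omega
  · have h1 : s - 1 + r = n + (s + r - n - 1) := by omega
    rw [h1, Nat.add_mod_left, Nat.mod_eq_of_lt (by omega)]; omega

lemma prefAt_dcl {n s i : ℕ} (hs1 : 1 ≤ s) (hsn : s ≤ n) (hi1 : 1 ≤ i) (hin : i ≤ n) :
    prefAt n s (dcl n s i) = i := by
  have hn : 0 < n := lt_of_lt_of_le hi1 hin
  rw [prefAt_eq hs1 hsn (dcl_lt hn), dcl_eq hs1 hsn hi1 hin]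
  split_ifs <;> omega

lemma prefAt_inj {n s r1 r2 : ℕ} (h1 : r1 < n) (h2 : r2 < n)
    (h : prefAt n s r1 = prefAt n s r2) : r1 = r2 :=
  have h' : (s - 1 + r1) % n = (s - 1 + r2) % n := by
    unfold prefAt at h; omega
  have : r1 % n = r2 % n := Nat.ModEq.add_left_cancel' (s - 1) h'
  by rwa [Nat.mod_eq_of_lt h1, Nat.mod_eq_of_lt h2] at this

lemma voteOf_eq {n s i : ℕ} {S : Finset ℕ} (hs1 : 1 ≤ s) (hsn : s ≤ n)
    (hi1 : 1 ≤ i) (hin : i ≤ n) (hiS : i ∈ S)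
    (hmin : ∀ r < dcl n s i, prefAt n s r ∉ S) : voteOf n S s = i := by
  haveI : Decidable (∃ r, prefAt n s r ∈ S) := Classical.dec _
  have hex : ∃ r, prefAt n s r ∈ S := ⟨dcl n s i, by rw [prefAt_dcl hs1 hsn hi1 hin]; exact hiS⟩
  have hfind : Nat.find hex = dcl n s i := by
    rw [Nat.find_eq_iff]
    exact ⟨by rw [prefAt_dcl hs1 hsn hi1 hin]; exact hiS, hmin⟩
  unfold voteOf
  rw [dif_pos hex, hfind, prefAt_dcl hs1 hsn hi1 hin]

lemma voteOf_ne {n s i j : ℕ} {S : Finset ℕ} (hs1 : 1 ≤ s) (hsn : s ≤ n)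
    (hi1 : 1 ≤ i) (hin : i ≤ n) (hj1 : 1 ≤ j) (hjn : j ≤ n) (hjS : j ∈ S)
    (hd : dcl n s j < dcl n s i) : voteOf n S s ≠ i := by
  haveI : Decidable (∃ r, prefAt n s r ∈ S) := Classical.dec _
  have hn : 0 < n := lt_of_lt_of_le hj1 hjn
  have hex : ∃ r, prefAt n s r ∈ S := ⟨dcl n s j, by rw [prefAt_dcl hs1 hsn hj1 hjn]; exact hjS⟩
  have hle : Nat.find hex ≤ dcl n s j :=
    Nat.find_le (by rw [prefAt_dcl hs1 hsn hj1 hjn]; exact hjS)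
  unfold voteOf
  rw [dif_pos hex]
  intro hcon
  have : prefAt n s (Nat.find hex) = prefAt n s (dcl n s i) := by
    rw [hcon, prefAt_dcl hs1 hsn hi1 hin]
  have := prefAt_inj (lt_of_le_of_lt hle (lt_trans hd (dcl_lt hn))) (dcl_lt hn) this
  omega



lemma mem_Acl_iff {n l d j : ℕ} (hd : n = 2 * l + 2 * d) :
    j ∈ Acl n l ↔ (1 ≤ j ∧ j ≤ l) ∨ (l + 1 ≤ j ∧ j ≤ n - l ∧ (j - l) % 2 = 0) := by
  have h2 : (n - 2 * l) / 2 = d := by omega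
  simp only [Acl, mem_union, mem_Icc, mem_image, h2]
  constructor
  · rintro (h | ⟨k, hk, rfl⟩)
    · exact Or.inl h
    · right; omega
  · rintro (h | h)
    · exact Or.inl h
    · exact Or.inr ⟨(j - l) / 2, by omega, by omega⟩

lemma mem_Bcl_iff {n l d j : ℕ} (hd : n = 2 * l + 2 * d) :
    j ∈ Bcl n l ↔ 1 ≤ j ∧ j ≤ n ∧
      ¬((1 ≤ j ∧ j ≤ l) ∨ (l + 1 ≤ j ∧ j ≤ n - l ∧ (j - l) % 2 = 0)) := by
  simp only [Bcl, Finset.mem_sdiff, Finset.mem_Icc, mem_Acl_iff hd]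
  tauto


section Votes
variable {n l d : ℕ} (hd : n = 2 * l + 2 * d) (hl : 2 ≤ l) (hd1 : 1 ≤ d)
include hd hl hd1

lemma voteA_one {s : ℕ} (hs : s = 1 ∨ (n - l + 1 ≤ s ∧ s ≤ n)) :
    voteOf n (Acl n l) s = 1 := by
  have h1A : (1 : ℕ) ∈ Acl n l := by rw [mem_Acl_iff hd]; omega
  rcases hs with rfl | ⟨h1, h2⟩
  · apply voteOf_eq (by omega) (by omega) (le_refl 1) (by omega) h1A
    intro r hr
    rw [dcl_eq (by omega) (by omega) (by omega) (by omega), if_pos le_rfl] at hr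
    omega
  · apply voteOf_eq (by omega) h2 (le_refl 1) (by omega) h1A
    intro r hr
    rw [dcl_eq (by omega) h2 (by omega) (by omega), if_neg (by omega : ¬ s ≤ 1)] at hr
    rw [prefAt_eq (by omega) h2 (by omega), if_pos (by omega), mem_Acl_iff hd]
    omega

lemma voteA_rival {i s : ℕ} (hiA : i ∈ Acl n l) (hi1 : i ≠ 1)
    (hs1 : 1 ≤ s) (hsn : s ≤ n) (hne1 : s ≠ i - 1) (hne2 : s ≠ i) :
    voteOf n (Acl n l) s ≠ i := by
  rw [mem_Acl_iff hd] at hiA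
  by_cases hil : i ≤ l
  · have hjA : i - 1 ∈ Acl n l := by rw [mem_Acl_iff hd]; omega
    apply voteOf_ne hs1 hsn (by omega) (by omega) (by omega) (by omega) hjA
    rw [dcl_eq hs1 hsn (by omega) (by omega), dcl_eq hs1 hsn (by omega) (by omega)]
    split_ifs <;> omega
  · have hjA : i - 2 ∈ Acl n l := by rw [mem_Acl_iff hd]; omega
    apply voteOf_ne hs1 hsn (by omega) (by omega) (by omega) (by omega) hjA
    rw [dcl_eq hs1 hsn (by omega) (by omega), dcl_eq hs1 hsn (by omega) (by omega)]
    split_ifs <;> omega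

lemma voteB_hero {s : ℕ} (hs1 : 1 ≤ s) (hsl : s ≤ l + 1) :
    voteOf n (Bcl n l) s = l + 1 := by
  have hB : l + 1 ∈ Bcl n l := by rw [mem_Bcl_iff hd]; omega
  apply voteOf_eq hs1 (by omega) (by omega) (by omega) hB
  intro r hr
  rw [dcl_eq hs1 (by omega) (by omega) (by omega), if_pos (by omega)] at hr
  rw [prefAt_eq hs1 (by omega) (by omega), if_pos (by omega), mem_Bcl_iff hd]
  omega

lemma voteB_rival {i s : ℕ} (hiB : i ∈ Bcl n l) (hi1 : i ≠ l + 1)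
    (hs1 : 1 ≤ s) (hsn : s ≤ n) (hne1 : s ≠ i - 1) (hne2 : s ≠ i) :
    voteOf n (Bcl n l) s ≠ i := by
  rw [mem_Bcl_iff hd] at hiB
  by_cases hil : n - l + 2 ≤ i
  · have hjB : i - 1 ∈ Bcl n l := by rw [mem_Bcl_iff hd]; omega
    apply voteOf_ne hs1 hsn (by omega) (by omega) (by omega) (by omega) hjB
    rw [dcl_eq hs1 hsn (by omega) (by omega), dcl_eq hs1 hsn (by omega) (by omega)]
    split_ifs <;> omega
  · have hjB : i - 2 ∈ Bcl n l := by rw [mem_Bcl_iff hd]; omega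
    apply voteOf_ne hs1 hsn (by omega) (by omega) (by omega) (by omega) hjB
    rw [dcl_eq hs1 hsn (by omega) (by omega), dcl_eq hs1 hsn (by omega) (by omega)]
    split_ifs <;> omega

lemma voteH_one {s : ℕ} (hs : s = 1 ∨ (l + 2 ≤ s ∧ s ≤ n)) :
    voteOf n ({1, l + 1} : Finset ℕ) s = 1 := by
  have h1 : (1 : ℕ) ∈ ({1, l + 1} : Finset ℕ) := by simp
  rcases hs with rfl | ⟨h1s, h2s⟩
  · apply voteOf_eq (by omega) (by omega) (le_refl 1) (by omega) h1
    intro r hr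
    rw [dcl_eq (by omega) (by omega) (by omega) (by omega), if_pos le_rfl] at hr
    omega
  · apply voteOf_eq (by omega) h2s (le_refl 1) (by omega) h1
    intro r hr
    rw [dcl_eq (by omega) h2s (by omega) (by omega), if_neg (by omega : ¬ s ≤ 1)] at hr
    rw [prefAt_eq (by omega) h2s (by omega), if_pos (by omega)]
    simp only [mem_insert, mem_singleton]
    omega

lemma voteH_rival {s : ℕ} (hs1 : 1 ≤ s) (hsn : s ≤ n)
    (h : s = 1 ∨ l + 2 ≤ s) : voteOf n ({1, l + 1} : Finset ℕ) s ≠ l + 1 := by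
  have := voteH_one hd hl hd1 (s := s) (by omega)
  omega
end Votes

lemma sum_fin_icc {M : Type*} [AddCommMonoid M] (n : ℕ) (f : ℕ → M) :
    ∑ x : Fin n, f ((x : ℕ) + 1) = ∑ s ∈ Icc 1 n, f s := by
  rw [Fin.sum_univ_eq_sum_range (fun k => f (k + 1)) n, ← Finset.Ico_add_one_right_eq_Icc,
    Finset.sum_Ico_eq_sum_range]
  simp [add_comm]

lemma card_fin_filter (n : ℕ) (P : ℕ → Prop) [DecidablePred P] :
    (Finset.univ.filter fun x : Fin n => P ((x : ℕ) + 1)).card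
      = ((Icc 1 n).filter P).card := by
  rw [Finset.card_filter, Finset.card_filter]
  exact sum_fin_icc n (fun s => if P s then 1 else 0)

/-- number of seeds in `{1,…,n}` voting for `i` in election among `S`. -/
noncomputable def cnt (n : ℕ) (S : Finset ℕ) (i : ℕ) : ℕ :=
  ((Icc 1 n).filter fun s => voteOf n S s = i).card

lemma cnt_le_of_subset {n i : ℕ} {S : Finset ℕ} {U : Finset ℕ}
    (h : ∀ s, 1 ≤ s → s ≤ n → voteOf n S s = i → s ∈ U) : cnt n S i ≤ U.card := by
  apply Finset.card_le_card
  intro s hs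
  rw [mem_filter, mem_Icc] at hs
  exact h s hs.1.1 hs.1.2 hs.2

lemma le_cnt_of_subset {n i : ℕ} {S : Finset ℕ} {T : Finset ℕ}
    (hT : T ⊆ Icc 1 n) (h : ∀ s ∈ T, voteOf n S s = i) : T.card ≤ cnt n S i := by
  apply Finset.card_le_card
  intro s hs
  rw [mem_filter]
  exact ⟨hT hs, h s hs⟩

lemma cnt_add_le {n i j : ℕ} {S : Finset ℕ} (hij : i ≠ j) :
    cnt n S i + cnt n S j ≤ n := by
  have hdisj : Disjoint ((Icc 1 n).filter fun s => voteOf n S s = i)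
      ((Icc 1 n).filter fun s => voteOf n S s = j) := by
    apply Finset.disjoint_filter_filter'
    intro P hP1 hP2 s hs
    exact absurd (hP1 s hs ▸ hP2 s hs) hij
  calc cnt n S i + cnt n S j
      = (((Icc 1 n).filter fun s => voteOf n S s = i)
          ∪ ((Icc 1 n).filter fun s => voteOf n S s = j)).card :=
        (Finset.card_union_of_disjoint hdisj).symm
    _ ≤ (Icc 1 n).card := Finset.card_le_card (by
        apply Finset.union_subset <;> exact Finset.filter_subset _ _)
    _ = n := by rw [Nat.card_Icc]; omega

section CntBounds
variable {n l d : ℕ} (hd : n = 2 * l + 2 * d) (hl : 2 ≤ l) (hd1 : 1 ≤ d)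
include hd hl hd1

lemma cntA_one : l + 1 ≤ cnt n (Acl n l) 1 := by
  have hcard : (insert 1 (Icc (n - l + 1) n)).card = l + 1 := by
    rw [Finset.card_insert_of_notMem (by rw [mem_Icc]; omega), Nat.card_Icc]; omega
  calc l + 1 = (insert 1 (Icc (n - l + 1) n)).card := hcard.symm
    _ ≤ cnt n (Acl n l) 1 := by
        apply le_cnt_of_subset
        · intro s hs
          simp only [mem_insert, mem_Icc] at hs ⊢
          omega
        · intro s hs
          simp only [mem_insert, mem_Icc] at hs
          exact voteA_one hd hl hd1 hs

lemma cntA_rival {i : ℕ} (hiA : i ∈ Acl n l) (hi1 : i ≠ 1) : cnt n (Acl n l) i ≤ 2 := by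
  have h2 : cnt n (Acl n l) i ≤ ({i - 1, i} : Finset ℕ).card := by
    apply cnt_le_of_subset
    intro s hs1 hsn hv
    simp only [mem_insert, mem_singleton]
    by_contra hcon
    push_neg at hcon
    exact voteA_rival hd hl hd1 hiA hi1 hs1 hsn hcon.1 hcon.2 hv
  exact h2.trans ((Finset.card_insert_le _ _).trans (by simp))

lemma cntB_hero : l + 1 ≤ cnt n (Bcl n l) (l + 1) := by
  calc l + 1 = (Icc 1 (l + 1)).card := by rw [Nat.card_Icc]; omega
    _ ≤ cnt n (Bcl n l) (l + 1) := by
        apply le_cnt_of_subset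
        · intro s hs
          rw [mem_Icc] at hs ⊢
          omega
        · intro s hs
          rw [mem_Icc] at hs
          exact voteB_hero hd hl hd1 hs.1 hs.2

lemma cntB_rival {i : ℕ} (hiB : i ∈ Bcl n l) (hi1 : i ≠ l + 1) : cnt n (Bcl n l) i ≤ 2 := by
  have h2 : cnt n (Bcl n l) i ≤ ({i - 1, i} : Finset ℕ).card := by
    apply cnt_le_of_subset
    intro s hs1 hsn hv
    simp only [mem_insert, mem_singleton]
    by_contra hcon
    push_neg at hcon
    exact voteB_rival hd hl hd1 hiB hi1 hs1 hsn hcon.1 hcon.2 hv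
  exact h2.trans ((Finset.card_insert_le _ _).trans (by simp))

lemma cntH_one : n - l ≤ cnt n ({1, l + 1} : Finset ℕ) 1 := by
  have hcard : (insert 1 (Icc (l + 2) n)).card = n - l := by
    rw [Finset.card_insert_of_notMem (by rw [mem_Icc]; omega), Nat.card_Icc]; omega
  calc n - l = (insert 1 (Icc (l + 2) n)).card := hcard.symm
    _ ≤ cnt n ({1, l + 1} : Finset ℕ) 1 := by
        apply le_cnt_of_subset
        · intro s hs
          simp only [mem_insert, mem_Icc] at hs ⊢
          omega
        · intro s hs
          simp only [mem_insert, mem_Icc] at hs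
          exact voteH_one hd hl hd1 hs

lemma cntH_rival : cnt n ({1, l + 1} : Finset ℕ) (l + 1) ≤ l := by
  have h2 : cnt n ({1, l + 1} : Finset ℕ) (l + 1) ≤ (Icc 2 (l + 1)).card := by
    apply cnt_le_of_subset
    intro s hs1 hsn hv
    rw [mem_Icc]
    by_contra hcon
    exact voteH_rival hd hl hd1 hs1 hsn (by omega) hv
  exact h2.trans (by rw [Nat.card_Icc]; omega)

end CntBounds

noncomputable def XiD (n : ℕ) {m : ℕ} (S : Finset ℕ) (i : ℕ) (s : Fin m → ℕ) : ℕ :=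
  (Finset.univ.filter fun j : Fin m => voteOf n S (s j) = i).card

lemma Xi_eq (n : ℕ) {m : ℕ} (S : Finset ℕ) (i : ℕ) (s : Fin m → ℕ) :
    Xi n S i s = XiD n S i s := by
  unfold Xi XiD
  congr!

lemma Pr_eq (n m : ℕ) (E : (Fin m → Fin n) → Prop) [DecidablePred E] :
    Pr n m E = ((Finset.univ.filter E).card : ℝ) / (n : ℝ) ^ m := by
  unfold Pr
  congr!

lemma pr_le_pow {n m : ℕ} (hn : 0 < n) (S : Finset ℕ) {h r : ℕ} (hhr : h ≠ r)
    {t : ℝ} (ht : 1 ≤ t) :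
    Pr n m (fun σ => Xi n S h (seed σ) ≤ Xi n S r (seed σ)) ≤
      ((n + (t - 1) * cnt n S r + (t⁻¹ - 1) * cnt n S h) / n) ^ m := by
  classical
  have ht0 : 0 < t := lt_of_lt_of_le one_pos ht
  set g : ℕ → ℝ := fun s =>
    if voteOf n S s = r then t else if voteOf n S s = h then t⁻¹ else 1 with hg
  have hg0 : ∀ s, 0 ≤ g s := by
    intro s
    simp only [hg]
    split_ifs <;> positivity
  -- pointwise product identity
  have hpt : ∀ s, g s = t ^ (if voteOf n S s = r then 1 else 0) *
      t⁻¹ ^ (if voteOf n S s = h then 1 else 0) := by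
    intro s
    by_cases h1 : voteOf n S s = r <;> by_cases h2 : voteOf n S s = h
    · exact absurd (h1 ▸ h2) (Ne.symm hhr)
    · simp [hg, h1, h2, hhr, Ne.symm hhr]
    · simp [hg, h1, h2, hhr, Ne.symm hhr]
    · simp [hg, h1, h2, hhr, Ne.symm hhr]
  -- pointwise affine identity
  have hpt2 : ∀ s, g s = 1 + (t - 1) * (if voteOf n S s = r then (1:ℝ) else 0) +
      (t⁻¹ - 1) * (if voteOf n S s = h then (1:ℝ) else 0) := by
    intro s
    by_cases h1 : voteOf n S s = r <;> by_cases h2 : voteOf n S s = h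
    · exact absurd (h1 ▸ h2) (Ne.symm hhr)
    · simp [hg, h1, h2, hhr, Ne.symm hhr]
    · simp [hg, h1, h2, hhr, Ne.symm hhr]
    · simp [hg, h1, h2, hhr, Ne.symm hhr]
  have key : ∀ σ : Fin m → Fin n, Xi n S h (seed σ) ≤ Xi n S r (seed σ) →
      1 ≤ ∏ j : Fin m, g (seed σ j) := by
    intro σ hσ
    have hprod : ∏ j : Fin m, g (seed σ j)
        = t ^ (XiD n S r (seed σ)) * (t ^ (XiD n S h (seed σ)))⁻¹ := by
      calc ∏ j : Fin m, g (seed σ j)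
          = ∏ j : Fin m, (t ^ (if voteOf n S (seed σ j) = r then 1 else 0) *
              t⁻¹ ^ (if voteOf n S (seed σ j) = h then 1 else 0)) := by
            exact Finset.prod_congr rfl fun j _ => hpt (seed σ j)
        _ = (∏ j : Fin m, t ^ (if voteOf n S (seed σ j) = r then 1 else 0)) *
            ∏ j : Fin m, t⁻¹ ^ (if voteOf n S (seed σ j) = h then 1 else 0) :=
            Finset.prod_mul_distrib
        _ = t ^ (∑ j : Fin m, if voteOf n S (seed σ j) = r then 1 else 0) *
            t⁻¹ ^ (∑ j : Fin m, if voteOf n S (seed σ j) = h then 1 else 0) := by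
            rw [Finset.prod_pow_eq_pow_sum, Finset.prod_pow_eq_pow_sum]
        _ = t ^ (XiD n S r (seed σ)) * (t ^ (XiD n S h (seed σ)))⁻¹ := by
            rw [XiD, XiD, Finset.card_filter, Finset.card_filter, inv_pow]
    rw [hprod, ← div_eq_mul_inv]
    rw [one_le_div (by positivity)]
    apply pow_le_pow_right₀ ht
    rw [Xi_eq, Xi_eq] at hσ
    exact hσ
  -- counting
  haveI : DecidablePred fun σ : Fin m → Fin n =>
      Xi n S h (seed σ) ≤ Xi n S r (seed σ) := fun _ => inferInstance
  rw [Pr_eq]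
  have step1 : ((Finset.univ.filter fun σ : Fin m → Fin n =>
      Xi n S h (seed σ) ≤ Xi n S r (seed σ)).card : ℝ)
      ≤ ∑ σ : Fin m → Fin n, ∏ j : Fin m, g (seed σ j) := by
    calc ((Finset.univ.filter fun σ : Fin m → Fin n =>
        Xi n S h (seed σ) ≤ Xi n S r (seed σ)).card : ℝ)
        = ∑ σ ∈ Finset.univ.filter fun σ : Fin m → Fin n =>
            Xi n S h (seed σ) ≤ Xi n S r (seed σ), (1:ℝ) := by
          rw [Finset.sum_const, nsmul_eq_mul, mul_one]
      _ ≤ ∑ σ ∈ Finset.univ.filter fun σ : Fin m → Fin n =>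
            Xi n S h (seed σ) ≤ Xi n S r (seed σ), ∏ j : Fin m, g (seed σ j) := by
          apply Finset.sum_le_sum
          intro σ hσ
          rw [Finset.mem_filter] at hσ
          exact key σ hσ.2
      _ ≤ ∑ σ : Fin m → Fin n, ∏ j : Fin m, g (seed σ j) := by
          apply Finset.sum_le_sum_of_subset_of_nonneg (Finset.filter_subset _ _)
          intro σ _ _
          exact Finset.prod_nonneg fun j _ => hg0 _
  have step2 : ∑ σ : Fin m → Fin n, ∏ j : Fin m, g (seed σ j)
      = (∑ x : Fin n, g ((x : ℕ) + 1)) ^ m := by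
    have e1 := Finset.prod_univ_sum (fun _ : Fin m => (univ : Finset (Fin n)))
      (fun _ x => g ((x : ℕ) + 1))
    rw [Fintype.piFinset_univ, Finset.prod_const, Finset.card_univ, Fintype.card_fin] at e1
    exact e1.symm
  have step3 : ∑ x : Fin n, g ((x : ℕ) + 1)
      = n + (t - 1) * cnt n S r + (t⁻¹ - 1) * cnt n S h := by
    rw [sum_fin_icc n g]
    calc ∑ s ∈ Icc 1 n, g s
        = ∑ s ∈ Icc 1 n, (1 + (t - 1) * (if voteOf n S s = r then (1:ℝ) else 0) +
            (t⁻¹ - 1) * (if voteOf n S s = h then (1:ℝ) else 0)) :=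
          Finset.sum_congr rfl fun s _ => hpt2 s
      _ = (Icc 1 n).card + (t - 1) * (∑ s ∈ Icc 1 n, if voteOf n S s = r then (1:ℝ) else 0)
          + (t⁻¹ - 1) * (∑ s ∈ Icc 1 n, if voteOf n S s = h then (1:ℝ) else 0) := by
          rw [Finset.sum_add_distrib, Finset.sum_add_distrib, ← Finset.mul_sum,
            ← Finset.mul_sum, Finset.sum_const, nsmul_eq_mul, mul_one]
      _ = n + (t - 1) * cnt n S r + (t⁻¹ - 1) * cnt n S h := by
          rw [Finset.sum_boole, Finset.sum_boole, Nat.card_Icc]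
          norm_num [cnt]
  have hfin : ((Finset.univ.filter fun σ : Fin m → Fin n =>
      Xi n S h (seed σ) ≤ Xi n S r (seed σ)).card : ℝ)
      ≤ (n + (t - 1) * cnt n S r + (t⁻¹ - 1) * cnt n S h) ^ m := by
    rw [← step3, ← step2]
    exact step1
  rw [div_pow]
  exact (div_le_div_iff_of_pos_right (by positivity : (0:ℝ) < (n:ℝ) ^ m)).mpr hfin

lemma base_bound {nr a b α β t : ℝ} (ht : 1 ≤ t) (hα : α ≤ a) (hb : b ≤ β) :
    nr + (t - 1) * b + (t⁻¹ - 1) * a ≤ nr + (t - 1) * β + (t⁻¹ - 1) * α := by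
  have ht0 : 0 < t := lt_of_lt_of_le one_pos ht
  have h1 : 0 ≤ t - 1 := by linarith
  have h2 : t⁻¹ ≤ 1 := inv_le_one_of_one_le₀ ht
  have h3 := mul_le_mul_of_nonneg_left hb h1
  have h4 := mul_le_mul_of_nonpos_left hα (by linarith : t⁻¹ - 1 ≤ 0)
  linarith

lemma sqrt_div_one_le {α β : ℝ} (hβ : 0 < β) (hβα : β ≤ α) :
    1 ≤ Real.sqrt α / Real.sqrt β :=
  (one_le_div (Real.sqrt_pos.mpr hβ)).mpr (Real.sqrt_le_sqrt hβα)

lemma opt_eq {α β : ℝ} (hβ : 0 < β) (hβα : β ≤ α) (nr : ℝ) :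
    nr + (Real.sqrt α / Real.sqrt β - 1) * β + ((Real.sqrt α / Real.sqrt β)⁻¹ - 1) * α
      = nr - (Real.sqrt α - Real.sqrt β) ^ 2 := by
  have hα : 0 < α := lt_of_lt_of_le hβ hβα
  have hx : Real.sqrt α ^ 2 = α := Real.sq_sqrt hα.le
  have hy : Real.sqrt β ^ 2 = β := Real.sq_sqrt hβ.le
  have hx0 : 0 < Real.sqrt α := Real.sqrt_pos.mpr hα
  have hy0 : 0 < Real.sqrt β := Real.sqrt_pos.mpr hβ
  have h1 : (Real.sqrt α / Real.sqrt β - 1) * β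
      = Real.sqrt α * Real.sqrt β - β := by
    have hyne : Real.sqrt β ≠ 0 := ne_of_gt hy0
    field_simp
    linear_combination (-Real.sqrt α) * hy
  have h2 : ((Real.sqrt α / Real.sqrt β)⁻¹ - 1) * α
      = Real.sqrt α * Real.sqrt β - α := by
    have hxne : Real.sqrt α ≠ 0 := ne_of_gt hx0
    rw [div_eq_mul_inv, mul_inv, inv_inv]
    field_simp
    linear_combination (-Real.sqrt β) * hx
  rw [h1, h2]
  linear_combination hx + hy

lemma Pr_nonneg (n m : ℕ) (E : (Fin m → Fin n) → Prop) : 0 ≤ Pr n m E := by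
  unfold Pr
  positivity

lemma Pr_mono {n m : ℕ} {E F : (Fin m → Fin n) → Prop}
    (h : ∀ σ, E σ → F σ) : Pr n m E ≤ Pr n m F := by
  classical
  rw [Pr_eq, Pr_eq]
  have hsub : Finset.univ.filter E ⊆ Finset.univ.filter F :=
    Finset.monotone_filter_right _ (fun σ _ => h σ)
  have hcard : ((Finset.univ.filter E).card : ℝ) ≤ ((Finset.univ.filter F).card : ℝ) :=
    Nat.cast_le.mpr (Finset.card_le_card hsub)
  rcases eq_or_lt_of_le (by positivity : (0:ℝ) ≤ (n:ℝ) ^ m) with h0 | h0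
  · rw [← h0, div_zero, div_zero]
  · exact (div_le_div_iff_of_pos_right h0).mpr hcard

lemma Pr_add {n m : ℕ} (E F : (Fin m → Fin n) → Prop) :
    Pr n m (fun σ => E σ ∨ F σ) ≤ Pr n m E + Pr n m F := by
  classical
  rw [Pr_eq, Pr_eq, Pr_eq, ← add_div]
  have hcard : ((Finset.univ.filter fun σ => E σ ∨ F σ).card : ℝ)
      ≤ ((Finset.univ.filter E).card : ℝ) + ((Finset.univ.filter F).card : ℝ) := by
    have hsub : (Finset.univ.filter fun σ => E σ ∨ F σ)
        ⊆ Finset.univ.filter E ∪ Finset.univ.filter F := by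
      intro σ hσ
      rw [Finset.mem_filter] at hσ
      rcases hσ.2 with h | h
      · exact Finset.mem_union_left _ (Finset.mem_filter.mpr ⟨Finset.mem_univ _, h⟩)
      · exact Finset.mem_union_right _ (Finset.mem_filter.mpr ⟨Finset.mem_univ _, h⟩)
    exact_mod_cast (Finset.card_le_card hsub).trans (Finset.card_union_le _ _)
  rcases eq_or_lt_of_le (by positivity : (0:ℝ) ≤ (n:ℝ) ^ m) with h0 | h0
  · rw [← h0, div_zero, div_zero]
  · exact (div_le_div_iff_of_pos_right h0).mpr hcard

lemma Pr_exists {n m : ℕ} (T : Finset ℕ) (P : ℕ → (Fin m → Fin n) → Prop) :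
    Pr n m (fun σ => ∃ i ∈ T, P i σ) ≤ ∑ i ∈ T, Pr n m (P i) := by
  classical
  rw [Pr_eq]
  have hsub : (Finset.univ.filter fun σ => ∃ i ∈ T, P i σ)
      ⊆ T.biUnion fun i => Finset.univ.filter (P i) := by
    intro σ hσ
    rw [Finset.mem_filter] at hσ
    obtain ⟨i, hi, hPi⟩ := hσ.2
    exact Finset.mem_biUnion.mpr ⟨i, hi, Finset.mem_filter.mpr ⟨Finset.mem_univ _, hPi⟩⟩
  have hcard : ((Finset.univ.filter fun σ => ∃ i ∈ T, P i σ).card : ℝ)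
      ≤ ∑ i ∈ T, ((Finset.univ.filter (P i)).card : ℝ) := by
    push_cast
    exact_mod_cast Nat.cast_le.mpr
      ((Finset.card_le_card hsub).trans (Finset.card_biUnion_le))
  calc ((Finset.univ.filter fun σ => ∃ i ∈ T, P i σ).card : ℝ) / (n : ℝ) ^ m
      ≤ (∑ i ∈ T, ((Finset.univ.filter (P i)).card : ℝ)) / (n : ℝ) ^ m := by
        rcases eq_or_lt_of_le (by positivity : (0:ℝ) ≤ (n:ℝ) ^ m) with h0 | h0
        · rw [← h0, div_zero, div_zero]
        · exact (div_le_div_iff_of_pos_right h0).mpr hcard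
    _ = ∑ i ∈ T, Pr n m (P i) := by
        rw [Finset.sum_div]
        exact Finset.sum_congr rfl fun i _ => by rw [Pr_eq]

lemma Pr_compl {n m : ℕ} (hn : 0 < n) (E : (Fin m → Fin n) → Prop) :
    Pr n m (fun σ => ¬ E σ) = 1 - Pr n m E := by
  classical
  rw [Pr_eq, Pr_eq]
  have hcard : (Finset.univ.filter fun σ : Fin m → Fin n => ¬ E σ).card
      = n ^ m - (Finset.univ.filter E).card := by
    rw [Finset.filter_not, Finset.card_sdiff_of_subset (Finset.filter_subset _ _)]
    congr 1
    rw [Finset.card_univ, Fintype.card_fun, Fintype.card_fin, Fintype.card_fin]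
  have hle : (Finset.univ.filter E).card ≤ n ^ m := by
    have := Finset.card_filter_le Finset.univ E
    rwa [Finset.card_univ, Fintype.card_fun, Fintype.card_fin, Fintype.card_fin] at this
  have hne : ((n : ℝ) ^ m) ≠ 0 := by positivity
  rw [hcard]
  push_cast [Nat.cast_sub hle]
  field_simp

/-- the two base rates. -/
noncomputable def q1 (n l : ℕ) : ℝ :=
  1 - (1 / (n : ℝ)) * (Real.sqrt ((l : ℝ) + 1) - Real.sqrt 2) ^ 2
noncomputable def q2 (n l : ℕ) : ℝ :=
  1 - (1 / (n : ℝ)) * (Real.sqrt ((n : ℝ) - (l : ℝ)) - Real.sqrt (l : ℝ)) ^ 2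

lemma cnt_le_n {n i : ℕ} {S : Finset ℕ} : cnt n S i ≤ n := by
  have := Finset.card_filter_le (Icc 1 n) (fun s => voteOf n S s = i)
  rwa [Nat.card_Icc, Nat.add_sub_cancel] at this

lemma event_le {n m : ℕ} (hn : 0 < n) (S : Finset ℕ) {h r : ℕ} (hhr : h ≠ r)
    {α β : ℝ} (hβ : 0 < β) (hβα : β ≤ α)
    (hch : α ≤ (cnt n S h : ℝ)) (hcr : (cnt n S r : ℝ) ≤ β) :
    Pr n m (fun σ => Xi n S h (seed σ) ≤ Xi n S r (seed σ)) ≤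
      (1 - (1 / (n : ℝ)) * (Real.sqrt α - Real.sqrt β) ^ 2) ^ m := by
  set t := Real.sqrt α / Real.sqrt β with htdef
  have ht : 1 ≤ t := sqrt_div_one_le hβ hβα
  have ht0 : 0 < t := lt_of_lt_of_le one_pos ht
  have hn0 : (0:ℝ) < n := by exact_mod_cast hn
  have hchn : (cnt n S h : ℝ) ≤ n := by exact_mod_cast cnt_le_n
  have hch0 : (0:ℝ) ≤ (cnt n S h : ℝ) := Nat.cast_nonneg _
  have hcr0 : (0:ℝ) ≤ (cnt n S r : ℝ) := Nat.cast_nonneg _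
  have hbase : (n:ℝ) + (t - 1) * (cnt n S r : ℝ) + (t⁻¹ - 1) * (cnt n S h : ℝ)
      ≤ (n:ℝ) - (Real.sqrt α - Real.sqrt β) ^ 2 := by
    rw [← opt_eq hβ hβα (n:ℝ)]
    exact base_bound ht hch hcr
  have hnn : (0:ℝ) ≤ ((n:ℝ) + (t - 1) * (cnt n S r : ℝ) + (t⁻¹ - 1) * (cnt n S h : ℝ)) / n := by
    apply div_nonneg ?_ hn0.le
    have h1 : 0 ≤ (t - 1) * (cnt n S r : ℝ) := mul_nonneg (by linarith) hcr0
    have h2 : (0:ℝ) ≤ t⁻¹ := by positivity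
    nlinarith
  calc Pr n m (fun σ => Xi n S h (seed σ) ≤ Xi n S r (seed σ))
      ≤ (((n:ℝ) + (t - 1) * (cnt n S r : ℝ) + (t⁻¹ - 1) * (cnt n S h : ℝ)) / n) ^ m :=
        pr_le_pow hn S hhr ht
    _ ≤ (1 - (1 / (n : ℝ)) * (Real.sqrt α - Real.sqrt β) ^ 2) ^ m := by
        apply pow_le_pow_left₀ hnn
        have heq : (1:ℝ) - (1 / (n : ℝ)) * (Real.sqrt α - Real.sqrt β) ^ 2
            = ((n:ℝ) - (Real.sqrt α - Real.sqrt β) ^ 2) / n := by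
          field_simp
        rw [heq]
        exact (div_le_div_iff_of_pos_right hn0).mpr hbase

section Main
variable {n l d : ℕ} (hd : n = 2 * l + 2 * d) (hl : 2 ≤ l) (hd1 : 1 ≤ d)
include hd hl hd1

lemma q1_pos : 0 < q1 n l := by
  have hx : Real.sqrt ((l:ℝ)+1) ^ 2 = (l:ℝ)+1 := Real.sq_sqrt (by positivity)
  have hy : Real.sqrt 2 ^ 2 = 2 := Real.sq_sqrt (by norm_num)
  have hx0 : 0 ≤ Real.sqrt ((l:ℝ)+1) := Real.sqrt_nonneg _
  have hy0 : 0 ≤ Real.sqrt 2 := Real.sqrt_nonneg _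
  have hl2 : (2:ℝ) ≤ (l:ℝ) := by exact_mod_cast hl
  have hxy : Real.sqrt 2 ≤ Real.sqrt ((l:ℝ)+1) := Real.sqrt_le_sqrt (by linarith)
  have hln : (l:ℝ) + 1 < (n:ℝ) := by
    have h1 : l + 2 ≤ n := by omega
    have h2 := (Nat.cast_le (α := ℝ)).mpr h1
    push_cast at h2
    linarith
  have hn0 : (0:ℝ) < n := by linarith
  have hz : (Real.sqrt ((l:ℝ)+1) - Real.sqrt 2) ^ 2 < (n:ℝ) := by
    nlinarith [mul_le_mul_of_nonneg_right hxy hy0, mul_nonneg hx0 hy0]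
  have h1 : (1/(n:ℝ)) * (Real.sqrt ((l:ℝ)+1) - Real.sqrt 2) ^ 2 < (1/(n:ℝ)) * n :=
    mul_lt_mul_of_pos_left hz (by positivity)
  rw [one_div_mul_cancel (ne_of_gt hn0)] at h1
  unfold q1
  linarith

lemma q1_lt_one : q1 n l < 1 := by
  have hx : Real.sqrt ((l:ℝ)+1) ^ 2 = (l:ℝ)+1 := Real.sq_sqrt (by positivity)
  have hy : Real.sqrt 2 ^ 2 = 2 := Real.sq_sqrt (by norm_num)
  have hl2 : (2:ℝ) ≤ (l:ℝ) := by exact_mod_cast hl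
  have hxy : Real.sqrt 2 < Real.sqrt ((l:ℝ)+1) := by
    apply Real.sqrt_lt_sqrt (by norm_num)
    linarith
  have hn0 : (0:ℝ) < n := by
    have : 0 < n := by omega
    exact_mod_cast this
  have hz : 0 < (Real.sqrt ((l:ℝ)+1) - Real.sqrt 2) ^ 2 :=
    pow_pos (by linarith) 2
  unfold q1
  nlinarith [mul_pos (by positivity : (0:ℝ) < 1/(n:ℝ)) hz]

lemma q2_pos : 0 < q2 n l := by
  have hcast : (l:ℝ) ≤ (n:ℝ) - (l:ℝ) := by
    have h1 : 2 * l ≤ n := by omega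
    have h2 := (Nat.cast_le (α := ℝ)).mpr h1
    push_cast at h2
    linarith
  have hl0 : (0:ℝ) < (l:ℝ) := by
    have : 0 < l := by omega
    exact_mod_cast this
  have hx : Real.sqrt ((n:ℝ)-(l:ℝ)) ^ 2 = (n:ℝ)-(l:ℝ) := Real.sq_sqrt (by linarith)
  have hy : Real.sqrt (l:ℝ) ^ 2 = (l:ℝ) := Real.sq_sqrt hl0.le
  have hx0 : 0 ≤ Real.sqrt ((n:ℝ)-(l:ℝ)) := Real.sqrt_nonneg _
  have hy0 : 0 ≤ Real.sqrt (l:ℝ) := Real.sqrt_nonneg _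
  have hxy : Real.sqrt (l:ℝ) ≤ Real.sqrt ((n:ℝ)-(l:ℝ)) := Real.sqrt_le_sqrt hcast
  have hn0 : (0:ℝ) < n := by linarith
  have hz : (Real.sqrt ((n:ℝ)-(l:ℝ)) - Real.sqrt (l:ℝ)) ^ 2 < (n:ℝ) := by
    nlinarith [mul_le_mul_of_nonneg_right hxy hy0, mul_nonneg hx0 hy0]
  have h1 : (1/(n:ℝ)) * (Real.sqrt ((n:ℝ)-(l:ℝ)) - Real.sqrt (l:ℝ)) ^ 2 < (1/(n:ℝ)) * n :=
    mul_lt_mul_of_pos_left hz (by positivity)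
  rw [one_div_mul_cancel (ne_of_gt hn0)] at h1
  unfold q2
  linarith

lemma q2_lt_one : q2 n l < 1 := by
  have hl0 : (0:ℝ) < (l:ℝ) := by
    have : 0 < l := by omega
    exact_mod_cast this
  have hcast : (l:ℝ) < (n:ℝ) - (l:ℝ) := by
    have h1 : 2 * l + 2 ≤ n := by omega
    have h2 := (Nat.cast_le (α := ℝ)).mpr h1
    push_cast at h2
    linarith
  have hxy : Real.sqrt (l:ℝ) < Real.sqrt ((n:ℝ)-(l:ℝ)) :=
    Real.sqrt_lt_sqrt hl0.le hcast
  have hn0 : (0:ℝ) < n := by linarith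
  have hz : 0 < (Real.sqrt ((n:ℝ)-(l:ℝ)) - Real.sqrt (l:ℝ)) ^ 2 :=
    pow_pos (by linarith) 2
  unfold q2
  nlinarith [mul_pos (by positivity : (0:ℝ) < 1/(n:ℝ)) hz]

end Main

section Main2
variable {n l d : ℕ} (hd : n = 2 * l + 2 * d) (hl : 2 ≤ l) (hd1 : 1 ≤ d)
include hd hl hd1

lemma Acl_subset : Acl n l ⊆ Icc 1 n := by
  intro j hj
  rw [mem_Acl_iff hd] at hj
  rw [mem_Icc]
  omega

lemma Bcl_subset : Bcl n l ⊆ Icc 1 n := fun j hj => (Finset.mem_sdiff.mp hj).1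

lemma not_wins_imp {m : ℕ} (σ : Fin m → Fin n) (hnw : ¬ Wins1 n l σ) :
    (∃ i ∈ (Acl n l).erase 1,
        Xi n (Acl n l) 1 (seed σ) ≤ Xi n (Acl n l) i (seed σ)) ∨
    (∃ i ∈ (Bcl n l).erase (l+1),
        Xi n (Bcl n l) (l+1) (seed σ) ≤ Xi n (Bcl n l) i (seed σ)) ∨
    Xi n {1, l+1} 1 (seed σ) ≤ Xi n {1, l+1} (l+1) (seed σ) := by
  by_contra hcon
  push_neg at hcon
  obtain ⟨h1, h2, h3⟩ := hcon
  apply hnw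
  refine ⟨?_, l+1, by rw [mem_Bcl_iff hd]; omega, ?_, ?_⟩
  · intro i hiA hne
    exact h1 i (Finset.mem_erase.mpr ⟨hne, hiA⟩)
  · intro i hiB hne
    exact h2 i (Finset.mem_erase.mpr ⟨hne, hiB⟩)
  · exact h3

lemma one_sub_p1_ge (m : ℕ) : 1 / (n:ℝ) ^ m ≤ 1 - p1 n m l := by
  classical
  have hn : 0 < n := by omega
  have hlln : l < n := by omega
  set σ0 : Fin m → Fin n := fun _ => (⟨l, hlln⟩ : Fin n) with hσ0
  rw [p1, ← Pr_compl hn, Pr_eq, one_div]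
  rw [inv_eq_one_div, div_le_div_iff₀ (by positivity) (by positivity)]
  have hl2A : l + 2 ∈ Acl n l := by rw [mem_Acl_iff hd]; omega
  have hmem : σ0 ∈ Finset.univ.filter (fun σ : Fin m → Fin n => ¬ Wins1 n l σ) := by
    rw [Finset.mem_filter]
    refine ⟨Finset.mem_univ _, ?_⟩
    rintro ⟨hA, -⟩
    have hlt := hA (l+2) hl2A (by omega)
    have hv : ∀ j : Fin m, voteOf n (Acl n l) (seed σ0 j) = l + 2 := by
      intro j
      show voteOf n (Acl n l) (l + 1) = l + 2
      apply voteOf_eq (by omega) (by omega) (by omega) (by omega) hl2A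
      intro r hr
      rw [dcl_eq (by omega) (by omega) (by omega) (by omega), if_pos (by omega)] at hr
      have hr0 : r = 0 := by omega
      subst hr0
      rw [prefAt_eq (by omega) (by omega) (by omega), if_pos (by omega), mem_Acl_iff hd]
      omega
    have hXi1 : Xi n (Acl n l) 1 (seed σ0) = 0 := by
      rw [Xi_eq, XiD, Finset.card_eq_zero, Finset.filter_eq_empty_iff]
      intro j _
      rw [hv j]
      omega
    rw [hXi1] at hlt
    omega
  have h1 : 0 < (Finset.univ.filter (fun σ : Fin m → Fin n => ¬ Wins1 n l σ)).card :=
    Finset.card_pos.mpr ⟨σ0, hmem⟩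
  have h2 : (1:ℝ) ≤ ((Finset.univ.filter (fun σ : Fin m → Fin n => ¬ Wins1 n l σ)).card : ℝ) := by
    exact_mod_cast h1
  nlinarith [pow_pos (by exact_mod_cast hn : (0:ℝ) < (n:ℝ)) m]

lemma one_sub_p1_pos (m : ℕ) : 0 < 1 - p1 n m l := by
  have hn0 : (0:ℝ) < (n:ℝ) := by
    have : 0 < n := by omega
    exact_mod_cast this
  exact lt_of_lt_of_le (by positivity) (one_sub_p1_ge hd hl hd1 m)

lemma one_sub_p1_le (m : ℕ) :
    1 - p1 n m l ≤ (2*(n:ℝ)+1) * (max (q1 n l) (q2 n l)) ^ m := by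
  classical
  have hn : 0 < n := by omega
  have hn0 : (0:ℝ) < n := by exact_mod_cast hn
  have hq10 : 0 ≤ q1 n l := (q1_pos hd hl hd1).le
  have hq20 : 0 ≤ q2 n l := (q2_pos hd hl hd1).le
  have hρ0 : (0:ℝ) ≤ max (q1 n l) (q2 n l) := le_trans hq10 (le_max_left _ _)
  have hρm : (0:ℝ) ≤ (max (q1 n l) (q2 n l)) ^ m := pow_nonneg hρ0 m
  -- per-event bounds
  have hA : ∀ i ∈ (Acl n l).erase 1,
      Pr n m (fun σ => Xi n (Acl n l) 1 (seed σ) ≤ Xi n (Acl n l) i (seed σ))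
        ≤ (max (q1 n l) (q2 n l)) ^ m := by
    intro i hi
    obtain ⟨hne, hiA⟩ := Finset.mem_erase.mp hi
    have hch : ((l:ℝ)+1) ≤ (cnt n (Acl n l) 1 : ℝ) := by
      exact_mod_cast Nat.cast_le.mpr (cntA_one hd hl hd1) |>.trans_eq' (by push_cast; ring)
    have hcr : (cnt n (Acl n l) i : ℝ) ≤ 2 := by
      exact_mod_cast cntA_rival hd hl hd1 hiA hne
    have hβα : (2:ℝ) ≤ (l:ℝ)+1 := by
      have : (2:ℝ) ≤ (l:ℝ) := by exact_mod_cast hl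
      linarith
    have := event_le (m := m) hn (Acl n l) (Ne.symm hne) (by norm_num : (0:ℝ) < 2) hβα hch hcr
    refine this.trans (pow_le_pow_left₀ ?_ ?_ m)
    · have := q1_pos hd hl hd1
      unfold q1 at this
      linarith
    · exact le_max_left _ _ |>.trans_eq' rfl
  have hB : ∀ i ∈ (Bcl n l).erase (l+1),
      Pr n m (fun σ => Xi n (Bcl n l) (l+1) (seed σ) ≤ Xi n (Bcl n l) i (seed σ))
        ≤ (max (q1 n l) (q2 n l)) ^ m := by
    intro i hi
    obtain ⟨hne, hiB⟩ := Finset.mem_erase.mp hi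
    have hch : ((l:ℝ)+1) ≤ (cnt n (Bcl n l) (l+1) : ℝ) := by
      exact_mod_cast Nat.cast_le.mpr (cntB_hero hd hl hd1) |>.trans_eq' (by push_cast; ring)
    have hcr : (cnt n (Bcl n l) i : ℝ) ≤ 2 := by
      exact_mod_cast cntB_rival hd hl hd1 hiB hne
    have hβα : (2:ℝ) ≤ (l:ℝ)+1 := by
      have : (2:ℝ) ≤ (l:ℝ) := by exact_mod_cast hl
      linarith
    have := event_le (m := m) hn (Bcl n l) (Ne.symm hne) (by norm_num : (0:ℝ) < 2) hβα hch hcr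
    refine this.trans (pow_le_pow_left₀ ?_ ?_ m)
    · have := q1_pos hd hl hd1
      unfold q1 at this
      linarith
    · exact le_max_left _ _
  have hH : Pr n m (fun σ => Xi n {1, l+1} 1 (seed σ) ≤ Xi n {1, l+1} (l+1) (seed σ))
      ≤ (max (q1 n l) (q2 n l)) ^ m := by
    have hch : ((n:ℝ)-(l:ℝ)) ≤ (cnt n ({1, l+1} : Finset ℕ) 1 : ℝ) := by
      have h1 := Nat.cast_le (α := ℝ).mpr (cntH_one hd hl hd1)
      have h2 : ((n - l : ℕ) : ℝ) = (n:ℝ) - (l:ℝ) := by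
        have : l ≤ n := by omega
        push_cast [this]
        ring
      linarith [h2 ▸ h1]
    have hcr : (cnt n ({1, l+1} : Finset ℕ) (l+1) : ℝ) ≤ (l:ℝ) := by
      exact_mod_cast cntH_rival hd hl hd1
    have hl0 : (0:ℝ) < (l:ℝ) := by
      have : 0 < l := by omega
      exact_mod_cast this
    have hβα : (l:ℝ) ≤ (n:ℝ)-(l:ℝ) := by
      have h1 : 2 * l ≤ n := by omega
      have h2 := (Nat.cast_le (α := ℝ)).mpr h1
      push_cast at h2
      linarith
    have := event_le (m := m) hn ({1, l+1} : Finset ℕ) (by omega : (1:ℕ) ≠ l+1) hl0 hβα hch hcr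
    refine this.trans (pow_le_pow_left₀ ?_ ?_ m)
    · have := q2_pos hd hl hd1
      unfold q2 at this
      linarith
    · exact le_max_right _ _
  -- assemble
  have hcardA : ((Acl n l).erase 1).card ≤ n := by
    have h1 : (Acl n l).erase 1 ⊆ Icc 1 n :=
      (Finset.erase_subset _ _).trans (Acl_subset hd hl hd1)
    have := Finset.card_le_card h1
    rwa [Nat.card_Icc, Nat.add_sub_cancel] at this
  have hcardB : ((Bcl n l).erase (l+1)).card ≤ n := by
    have h1 : (Bcl n l).erase (l+1) ⊆ Icc 1 n :=
      (Finset.erase_subset _ _).trans (Bcl_subset hd hl hd1)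
    have := Finset.card_le_card h1
    rwa [Nat.card_Icc, Nat.add_sub_cancel] at this
  rw [p1, ← Pr_compl hn]
  calc Pr n m (fun σ => ¬ Wins1 n l σ)
      ≤ Pr n m (fun σ =>
          (∃ i ∈ (Acl n l).erase 1,
            Xi n (Acl n l) 1 (seed σ) ≤ Xi n (Acl n l) i (seed σ)) ∨
          ((∃ i ∈ (Bcl n l).erase (l+1),
            Xi n (Bcl n l) (l+1) (seed σ) ≤ Xi n (Bcl n l) i (seed σ)) ∨
          Xi n {1, l+1} 1 (seed σ) ≤ Xi n {1, l+1} (l+1) (seed σ))) := by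
        apply Pr_mono
        intro σ hσ
        rcases not_wins_imp hd hl hd1 σ hσ with h | h | h
        · exact Or.inl h
        · exact Or.inr (Or.inl h)
        · exact Or.inr (Or.inr h)
    _ ≤ Pr n m (fun σ => ∃ i ∈ (Acl n l).erase 1,
            Xi n (Acl n l) 1 (seed σ) ≤ Xi n (Acl n l) i (seed σ))
        + (Pr n m (fun σ => ∃ i ∈ (Bcl n l).erase (l+1),
            Xi n (Bcl n l) (l+1) (seed σ) ≤ Xi n (Bcl n l) i (seed σ))
          + Pr n m (fun σ => Xi n {1, l+1} 1 (seed σ) ≤ Xi n {1, l+1} (l+1) (seed σ))) := by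
        refine (Pr_add _ _).trans ?_
        gcongr
        exact Pr_add _ _
    _ ≤ (n:ℝ) * (max (q1 n l) (q2 n l)) ^ m
        + ((n:ℝ) * (max (q1 n l) (q2 n l)) ^ m + (max (q1 n l) (q2 n l)) ^ m) := by
        refine add_le_add ?_ (add_le_add ?_ hH)
        · refine (Pr_exists _ _).trans ?_
          refine (Finset.sum_le_card_nsmul _ _ _ hA).trans ?_
          rw [nsmul_eq_mul]
          exact mul_le_mul_of_nonneg_right (by exact_mod_cast hcardA) hρm
        · refine (Pr_exists _ _).trans ?_
          refine (Finset.sum_le_card_nsmul _ _ _ hB).trans ?_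
          rw [nsmul_eq_mul]
          exact mul_le_mul_of_nonneg_right (by exact_mod_cast hcardB) hρm
    _ = (2*(n:ℝ)+1) * (max (q1 n l) (q2 n l)) ^ m := by ring

end Main2

/-- The limsup as `m → ∞` of `(1/m)·log(1 − p₁(n,m,l))` is at most
`log(max{1 − (1/n)(√(l+1) − √2)², 1 − (1/n)(√(n−l) − √l)²})`, which is strictly negative. -/
theorem limsup_log_one_sub_p1_neg (n l : ℕ) (hn6 : 6 ≤ n) (hneven : Even n)
    (hl2 : 2 ≤ l) (hln : l ≤ n / 2 - 1) :
    Filter.limsup (fun m : ℕ => Real.log (1 - p1 n m l) / (m : ℝ)) atTop ≤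
      Real.log (max (1 - (1 / (n : ℝ)) * (Real.sqrt ((l : ℝ) + 1) - Real.sqrt 2) ^ 2)
        (1 - (1 / (n : ℝ)) * (Real.sqrt ((n : ℝ) - (l : ℝ)) - Real.sqrt (l : ℝ)) ^ 2)) ∧
    Real.log (max (1 - (1 / (n : ℝ)) * (Real.sqrt ((l : ℝ) + 1) - Real.sqrt 2) ^ 2)
        (1 - (1 / (n : ℝ)) * (Real.sqrt ((n : ℝ) - (l : ℝ)) - Real.sqrt (l : ℝ)) ^ 2)) < 0 := by

  obtain ⟨t0, ht0⟩ := hneven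
  obtain ⟨d, hd, hd1⟩ : ∃ d, n = 2 * l + 2 * d ∧ 1 ≤ d := ⟨t0 - l, by omega, by omega⟩
  have hmaxeq : max (1 - (1 / (n : ℝ)) * (Real.sqrt ((l : ℝ) + 1) - Real.sqrt 2) ^ 2)
        (1 - (1 / (n : ℝ)) * (Real.sqrt ((n : ℝ) - (l : ℝ)) - Real.sqrt (l : ℝ)) ^ 2)
      = max (q1 n l) (q2 n l) := rfl
  rw [hmaxeq]
  set ρ := max (q1 n l) (q2 n l) with hρdef
  have hρpos : 0 < ρ := lt_of_lt_of_le (q1_pos hd hl2 hd1) (le_max_left _ _)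
  have hρlt1 : ρ < 1 := max_lt (q1_lt_one hd hl2 hd1) (q2_lt_one hd hl2 hd1)
  have hlog : Real.log ρ < 0 := Real.log_neg hρpos hρlt1
  refine ⟨?_, hlog⟩
  set C : ℝ := 2 * (n : ℝ) + 1 with hC_def
  have hC : 0 < C := by positivity
  have hf_le0 : ∀ m : ℕ, Real.log (1 - p1 n m l) / (m : ℝ) ≤ 0 := by
    intro m
    apply div_nonpos_of_nonpos_of_nonneg ?_ (Nat.cast_nonneg m)
    apply Real.log_nonpos
    · linarith [one_sub_p1_pos hd hl2 hd1 m]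
    · have := Pr_nonneg n m (Wins1 n l)
      unfold p1
      linarith
  have hev : ∀ᶠ m : ℕ in atTop, Real.log (1 - p1 n m l) / (m : ℝ)
      ≤ Real.log C / (m : ℝ) + Real.log ρ := by
    filter_upwards [eventually_ge_atTop 1] with m hm
    have hmpos : (0:ℝ) < m := by exact_mod_cast hm
    have h2 : 1 - p1 n m l ≤ C * ρ ^ m := one_sub_p1_le hd hl2 hd1 m
    have h3 := Real.log_le_log (one_sub_p1_pos hd hl2 hd1 m) h2
    rw [Real.log_mul (ne_of_gt hC) (by positivity), Real.log_pow] at h3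
    calc Real.log (1 - p1 n m l) / (m : ℝ)
        ≤ (Real.log C + m * Real.log ρ) / (m : ℝ) := (div_le_div_iff_of_pos_right hmpos).mpr h3
      _ = Real.log C / m + Real.log ρ := by
          rw [add_div, mul_comm, mul_div_assoc, div_self (ne_of_gt hmpos), mul_one]
  have hg_lim : Tendsto (fun m : ℕ => Real.log C / (m : ℝ) + Real.log ρ) atTop
      (nhds (Real.log ρ)) := by
    have h0 : Tendsto (fun m : ℕ => Real.log C / (m : ℝ)) atTop (nhds 0) :=
      tendsto_const_div_atTop_nhds_zero_nat _
    simpa using h0.add tendsto_const_nhds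
  have hn1 : (1:ℝ) ≤ (n:ℝ) := by
    have : 1 ≤ n := by omega
    exact_mod_cast this
  have hflb : ∀ m : ℕ, -Real.log n ≤ Real.log (1 - p1 n m l) / (m : ℝ) := by
    intro m
    rcases Nat.eq_zero_or_pos m with rfl | hm
    · simp only [Nat.cast_zero, div_zero]
      simpa using Real.log_nonneg hn1
    · have hmpos : (0:ℝ) < m := by exact_mod_cast hm
      have h1 : Real.log ((1:ℝ) / (n:ℝ) ^ m) ≤ Real.log (1 - p1 n m l) :=
        Real.log_le_log (by positivity) (one_sub_p1_ge hd hl2 hd1 m)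
      have h2 : Real.log ((1:ℝ) / (n:ℝ) ^ m) = -((m : ℝ) * Real.log n) := by
        rw [one_div, Real.log_inv, Real.log_pow]
      rw [h2] at h1
      calc -Real.log n = (-((m:ℝ) * Real.log n)) / (m : ℝ) := by
            rw [mul_comm, neg_div, mul_div_assoc, div_self (ne_of_gt hmpos), mul_one]
          _ ≤ Real.log (1 - p1 n m l) / (m : ℝ) := (div_le_div_iff_of_pos_right hmpos).mpr h1
  have hcob : IsCoboundedUnder (· ≤ ·) atTop
      (fun m : ℕ => Real.log (1 - p1 n m l) / (m : ℝ)) :=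
    IsBoundedUnder.isCoboundedUnder_le (isBoundedUnder_of ⟨-Real.log n, hflb⟩)
  have hbdd : IsBoundedUnder (· ≤ ·) atTop
      (fun m : ℕ => Real.log C / (m : ℝ) + Real.log ρ) :=
    hg_lim.isBoundedUnder_le
  calc Filter.limsup (fun m : ℕ => Real.log (1 - p1 n m l) / (m : ℝ)) atTop
      ≤ Filter.limsup (fun m : ℕ => Real.log C / (m : ℝ) + Real.log ρ) atTop :=
        limsup_le_limsup hev hcob hbdd
    _ = Real.log ρ := hg_lim.limsup_eq
end TwoRound
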